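/- Let m be an odd positive integer and q a power of 2. A maximal 1-generator QC code C of index 2 in (F_q[x]/(x^m+1))^2 is μ_{−1}-LCD if and only if there exists a unique c(x) ∈ F_q[x]/(x^m+1) such that C = F_q[x]·(c(x), c(x)+1). Furthermore, the total number of μ_{−1}-LCD maximal 1-generator QC codes in (F_q[x]/(x^m+1))^2 is q^m. -/

import Mathlib

open scoped BigOperators
open Polynomial

/-- The Euclidean dual of a linear code inside `(F[x]/(x^m - 1))^l`, each factor being
identified with `F^m` (coordinates indexed by `ZMod m`) via coefficient vectors. -/
def qcDual {F : Type*} [Field F] {l m : ℕ} [NeZero m]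
    (C : Submodule F (Fin l → ZMod m → F)) : Submodule F (Fin l → ZMod m → F) where
  carrier := {b | ∀ c ∈ C, ∑ j, ∑ i, b j i * c j i = 0}
  zero_mem' := by intro c hc; simp
  add_mem' := by
    intro x y hx hy c hc
    simp only [Set.mem_setOf_eq, Pi.add_apply, add_mul, Finset.sum_add_distrib,
      hx c hc, hy c hc, add_zero]
  smul_mem' := by
    intro r x hx c hc
    simp only [Set.mem_setOf_eq, Pi.smul_apply, smul_eq_mul, mul_assoc,
      ← Finset.mul_sum, hx c hc, mul_zero]

/-- The coordinate permutation `μ_a` of `(F[x]/(x^m - 1))^l`, sending each component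
`c_j(x)` to `c_j(x^a) mod (x^m - 1)`; on coefficient vectors the coefficient of `x^i`
of the image of `c_j` is the coefficient of `x^(a⁻¹ i)` of `c_j`. -/
def muQC {F : Type*} [Field F] (l m : ℕ) (a : ℤ) :
    (Fin l → ZMod m → F) →ₗ[F] (Fin l → ZMod m → F) where
  toFun c := fun j i => c j (((a : ZMod m))⁻¹ * i)
  map_add' := fun _ _ => rfl
  map_smul' := fun _ _ => rfl

/-- The coefficient vector (indexed by `ZMod m`) of a polynomial of degree `< m`,
identifying `F[x]/(x^m - 1)` with `F^m`. -/
def polyToVec {F : Type*} [Field F] (m : ℕ) [NeZero m] (p : Polynomial F) : ZMod m → F :=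
  fun i => p.coeff i.val

/-- The 1-generator quasi-cyclic code of index `2` generated by
`(c₁(x), c₂(x)) ∈ (F[x]/(x^m + 1))^2` (here `q` is even, so `x^m + 1 = x^m - 1`). -/
def oneGenQC2 {F : Type*} [Field F] (m : ℕ) [NeZero m] (c₁ c₂ : Polynomial F) :
    Submodule F (Fin 2 → ZMod m → F) :=
  Submodule.span F
    {v | ∃ p : Polynomial F,
      v = ![polyToVec m ((p * c₁) % (X ^ m + 1)), polyToVec m ((p * c₂) % (X ^ m + 1))]}

/-!
Write `𝔸 = F[x]/(x^m - 1)`, which is `F[x]/(x^m + 1)` in characteristic `2`, so that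
`C = F[x]·(c₁, c₂)` is the image of the cyclic `𝔸`-module `𝔸·(γ₁, γ₂)` under coefficient vectors.
Since `∑ᵢ aᵢ b₋ᵢ` is the constant term of `a b`, the Euclidean pairing of `a` with `μ₋₁ b` is the
constant term of `a₁ b₁ + a₂ b₂`, a nondegenerate form; hence `μ₋₁(C)^⊥ = {a | a₁ γ₁ + a₂ γ₂ = 0}`
and `C ∩ μ₋₁(C)^⊥` consists of the `z (γ₁, γ₂)` with `z (γ₁ + γ₂)² = z (γ₁² + γ₂²) = 0`.
For odd `m` the ring `𝔸` is reduced, so this says `z (γ₁ + γ₂) = 0`; as maximality makes `γ₁, γ₂`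
coprime, `C` is `μ₋₁`-LCD iff `γ₁ + γ₂` is a non-zero-divisor, i.e. a unit of the finite ring `𝔸`.
Finally `𝔸·(γ₁, γ₂) = 𝔸·(γ, γ + 1)` has a solution iff `γ₁ + γ₂` is a unit, namely
`γ = (γ₁ + γ₂)⁻¹ γ₁`, and `γ ↦ 𝔸·(γ, γ + 1)` is injective, which also counts the codes: `|𝔸| = q^m`.
-/

open AdjoinRoot
open scoped nonZeroDivisors

namespace Polynomial

variable {R : Type*} [Ring R] (n : ℕ) [NeZero n]

theorem monic_X_pow_sub_one : (X ^ n - 1 : R[X]).Monic := by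
  simpa using monic_X_pow_sub_C (1 : R) (NeZero.ne n)

theorem degree_X_pow_sub_one [Nontrivial R] : (X ^ n - 1 : R[X]).degree = n := by
  simpa using degree_X_pow_sub_C (Nat.pos_of_neZero n) (1 : R)

end Polynomial

section SpanSingleton

variable {R : Type*} [CommRing R]

theorem eq_of_span_singleton_add_one_eq {γ γ' : R}
    (h : R ∙ (γ, γ + 1) = R ∙ (γ', γ' + 1)) : γ = γ' := by
  obtain ⟨z, hz⟩ := Submodule.mem_span_singleton.mp (h ▸ Submodule.mem_span_singleton_self _ :
    (γ, γ + 1) ∈ R ∙ (γ', γ' + 1))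
  simp only [Prod.smul_mk, smul_eq_mul, Prod.mk.injEq] at hz
  have hz1 : z = 1 := by linear_combination hz.2 - hz.1
  rw [← hz.1, hz1, one_mul]

variable [CharP R 2]

theorem isUnit_add_iff_exists_span_singleton_eq (γ₁ γ₂ : R) :
    IsUnit (γ₁ + γ₂) ↔ ∃ γ, R ∙ (γ₁, γ₂) = R ∙ (γ, γ + 1) := by
  constructor
  · intro hu
    have hinv : (γ₁ + γ₂) * ↑hu.unit⁻¹ = 1 := hu.mul_val_inv
    refine ⟨↑hu.unit⁻¹ * γ₁, ?_⟩
    have hγ : (γ₁, γ₂) = (γ₁ + γ₂) • (↑hu.unit⁻¹ * γ₁, ↑hu.unit⁻¹ * γ₁ + 1) := by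
      simp only [Prod.smul_mk, smul_eq_mul, Prod.mk.injEq]
      constructor
      · linear_combination -γ₁ * hinv
      · linear_combination -γ₁ * hinv - CharTwo.add_self_eq_zero γ₁
    rw [hγ, Submodule.span_singleton_smul_eq hu]
  · rintro ⟨γ, h⟩
    obtain ⟨z, hz⟩ := Submodule.mem_span_singleton.mp (h ▸ Submodule.mem_span_singleton_self _ :
      (γ, γ + 1) ∈ R ∙ (γ₁, γ₂))
    simp only [Prod.smul_mk, smul_eq_mul, Prod.mk.injEq] at hz
    exact IsUnit.of_mul_eq_one z (by linear_combination hz.1 + hz.2 + CharTwo.add_self_eq_zero γ)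

theorem isUnit_add_iff_existsUnique_span_singleton_eq (γ₁ γ₂ : R) :
    IsUnit (γ₁ + γ₂) ↔ ∃! γ, R ∙ (γ₁, γ₂) = R ∙ (γ, γ + 1) := by
  rw [isUnit_add_iff_exists_span_singleton_eq]
  exact ⟨fun ⟨γ, hγ⟩ => ⟨γ, hγ, fun _ hγ' => eq_of_span_singleton_add_one_eq (hγ'.symm.trans hγ)⟩,
    ExistsUnique.exists⟩

theorem add_mem_nonZeroDivisors_iff_of_isCoprime [IsReduced R] {γ₁ γ₂ : R}
    (h : IsCoprime γ₁ γ₂) :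
    γ₁ + γ₂ ∈ R⁰ ↔ ∀ z : R, z * (γ₁ ^ 2 + γ₂ ^ 2) = 0 → z • (γ₁, γ₂) = 0 := by
  simp only [mem_nonZeroDivisors_iff_right, ← CharTwo.add_sq, Prod.smul_mk, smul_eq_mul,
    Prod.mk_eq_zero]
  constructor
  · intro hnzd z hz
    have hz' : z * (γ₁ + γ₂) = 0 :=
      IsReduced.eq_zero _ ⟨2, by linear_combination z * hz⟩
    simp [hnzd z hz']
  · intro hker z hz
    obtain ⟨a, b, hab⟩ := h
    obtain ⟨h₁, h₂⟩ := hker z (by linear_combination (γ₁ + γ₂) * hz)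
    linear_combination a * h₁ + b * h₂ - z * hab

end SpanSingleton

namespace AdjoinRoot

variable {R : Type*} [CommRing R] [Nontrivial R] {f : R[X]}

theorem modByMonicHom_mk_of_degree_lt (hf : f.Monic) {p : R[X]} (hp : p.degree < f.degree) :
    modByMonicHom hf (mk f p) = p := by
  rw [modByMonicHom_mk, (modByMonic_eq_self_iff hf).2 hp]

theorem existsUnique_degree_lt_iff (hf : f.Monic) (P : AdjoinRoot f → Prop) :
    (∃! p : R[X], p.degree < f.degree ∧ P (mk f p)) ↔ ∃! z, P z := by
  have hdeg (z : AdjoinRoot f) : (modByMonicHom hf z).degree < f.degree := by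
    obtain ⟨p, rfl⟩ := mk_surjective z
    rw [modByMonicHom_mk]
    exact degree_modByMonic_lt p hf
  constructor
  · rintro ⟨p, ⟨-, hP⟩, huniq⟩
    refine ⟨mk f p, hP, fun z hz => ?_⟩
    have hmk : mk f (modByMonicHom hf z) = z := mk_leftInverse hf z
    rw [← hmk, huniq _ ⟨hdeg z, by rwa [hmk]⟩]
  · rintro ⟨z, hP, huniq⟩
    have hmk : mk f (modByMonicHom hf z) = z := mk_leftInverse hf z
    refine ⟨modByMonicHom hf z, ⟨hdeg z, by rwa [hmk]⟩, fun p ⟨hp, hPp⟩ => ?_⟩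
    rw [← huniq _ hPp, modByMonicHom_mk_of_degree_lt hf hp]

theorem isReduced_of_squarefree {K : Type*} [Field K] {g : K[X]} (hg : Squarefree g) :
    IsReduced (AdjoinRoot g) :=
  (Ideal.isRadical_iff_quotient_reduced _).mp (isRadical_iff_span_singleton.mp hg.isRadical)

theorem isCoprime_mk_of_gcd_gcd_eq_one {K : Type*} [Field K] [DecidableEq K] {g p q : K[X]}
    (h : gcd (gcd p q) g = 1) : IsCoprime (mk g p) (mk g q) := by
  obtain ⟨a, b, hab⟩ := exists_gcd_eq_mul_add_mul p q
  obtain ⟨u, v, huv⟩ := (gcd_isUnit_iff _ _).mp (h ▸ isUnit_one)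
  refine ⟨mk g (u * a), mk g (u * b), ?_⟩
  have hbezout : u * a * p + u * b * q = 1 - v * g := by linear_combination huv - u * hab
  simpa only [map_add, map_mul, map_sub, map_one, mk_self, mul_zero, sub_zero] using
    congrArg (mk g) hbezout

end AdjoinRoot

section Cyclic

variable {F : Type*} [Field F] {m : ℕ} [NeZero m]

local notation "𝔸" => AdjoinRoot (X ^ m - 1 : F[X])

variable (F m) in
noncomputable def cyclicCoords : 𝔸 →ₗ[F] (ZMod m → F) :=
  LinearMap.pi (fun i : ZMod m => lcoeff F i.val) ∘ₗ modByMonicHom (monic_X_pow_sub_one m)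

theorem cyclicCoords_mk (p : F[X]) (i : ZMod m) :
    cyclicCoords F m (mk _ p) i = (p %ₘ (X ^ m - 1)).coeff i.val := by
  simp [cyclicCoords, modByMonicHom_mk]

theorem cyclicCoords_injective : Function.Injective (cyclicCoords F m) := by
  rw [← LinearMap.ker_eq_bot, LinearMap.ker_eq_bot']
  intro z hz
  obtain ⟨p, rfl⟩ := mk_surjective z
  rw [mk_eq_zero, ← modByMonic_eq_zero_iff_dvd (monic_X_pow_sub_one m)]
  ext k
  rw [coeff_zero]
  by_cases hk : k < m
  · simpa [cyclicCoords_mk, ZMod.val_cast_of_lt hk] using congrFun hz k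
  · refine coeff_eq_zero_of_degree_lt ((degree_modByMonic_lt p (monic_X_pow_sub_one m)).trans_le ?_)
    rw [degree_X_pow_sub_one m]
    exact_mod_cast not_lt.mp hk

theorem cyclicCoords_root_pow (n : ℕ) :
    cyclicCoords F m (root _ ^ n) = Pi.single (n : ZMod m) 1 := by
  have hroot : root (X ^ m - 1 : F[X]) ^ m = 1 := by
    have h := mk_self (f := (X ^ m - 1 : F[X]))
    rwa [map_sub, map_pow, mk_X, map_one, sub_eq_zero] at h
  have hdeg : (X ^ (n % m) : F[X]).degree < (X ^ m - 1 : F[X]).degree := by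
    rw [degree_X_pow, degree_X_pow_sub_one m]
    exact_mod_cast Nat.mod_lt n (Nat.pos_of_neZero m)
  rw [pow_eq_pow_mod n hroot, ← mk_X, ← map_pow]
  ext i
  rw [cyclicCoords_mk, (modByMonic_eq_self_iff (monic_X_pow_sub_one m)).2 hdeg, coeff_X_pow,
    Pi.single_apply, ← ZMod.val_natCast]
  simp only [(ZMod.val_injective m).eq_iff]

theorem sum_cyclicCoords_mul_cyclicCoords_neg (z w : 𝔸) :
    ∑ i, cyclicCoords F m z i * cyclicCoords F m w (-i) = cyclicCoords F m (z * w) 0 := by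
  let pb := powerBasis' (monic_X_pow_sub_one (R := F) m)
  suffices h : ∑ i, (LinearMap.mul F F).compl₁₂ (LinearMap.proj i ∘ₗ cyclicCoords F m)
      (LinearMap.proj (-i) ∘ₗ cyclicCoords F m) =
      (LinearMap.mul F 𝔸).compr₂ (LinearMap.proj 0 ∘ₗ cyclicCoords F m) by
    simpa using LinearMap.congr_fun₂ h z w
  refine LinearMap.ext_basis pb.basis pb.basis fun a b => ?_
  simp only [pb, LinearMap.coe_sum, Finset.sum_apply, LinearMap.compl₁₂_apply,
    LinearMap.compr₂_apply, LinearMap.mul_apply', LinearMap.comp_apply, LinearMap.proj_apply,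
    PowerBasis.coe_basis, powerBasis'_gen, ← pow_add, cyclicCoords_root_pow]
  rw [Finset.sum_eq_single_of_mem (a : ZMod m) (Finset.mem_univ _)
    fun i _ hi => by simp [Pi.single_apply, hi]]
  simp [Pi.single_apply, neg_eq_iff_add_eq_zero, eq_comm (a := (0 : ZMod m))]

theorem cyclicCoords_mul_root_pow_zero (u : 𝔸) (n : ℕ) :
    cyclicCoords F m (u * root _ ^ n) 0 = cyclicCoords F m u (-n) := by
  simp [← sum_cyclicCoords_mul_cyclicCoords_neg, cyclicCoords_root_pow, Pi.single_apply,
    neg_eq_iff_eq_neg]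

theorem eq_zero_of_forall_cyclicCoords_mul_zero {u : 𝔸}
    (h : ∀ w, cyclicCoords F m (w * u) 0 = 0) : u = 0 := by
  refine cyclicCoords_injective (funext fun i => ?_)
  rw [map_zero, Pi.zero_apply]
  have hi := h (root _ ^ (-i).val)
  rwa [mul_comm, cyclicCoords_mul_root_pow_zero, ZMod.natCast_zmod_val, neg_neg] at hi

variable (F m) in
theorem natCard_adjoinRoot_X_pow_sub_one [Finite F] : Nat.card 𝔸 = Nat.card F ^ m := by
  have hf := monic_X_pow_sub_one (R := F) m
  have := hf.finite_adjoinRoot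
  rw [Module.natCard_eq_pow_finrank (K := F), (powerBasis' hf).finrank, powerBasis'_dim]
  congr 1
  simpa using natDegree_X_pow_sub_C (n := m) (r := (1 : F))

omit [NeZero m] in
theorem isReduced_adjoinRoot_X_pow_sub_one (hm : (m : F) ≠ 0) : IsReduced 𝔸 :=
  isReduced_of_squarefree (by simpa using (separable_X_pow_sub_C (1 : F) hm one_ne_zero).squarefree)

instance charP_adjoinRoot_X_pow_sub_one (p : ℕ) [CharP F p] : CharP 𝔸 p :=
  have := AdjoinRoot.nontrivial (X ^ m - 1 : F[X]) (by simp [degree_X_pow_sub_one m, NeZero.ne m])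
  charP_of_injective_algebraMap (algebraMap F 𝔸).injective p

variable (F m) in
noncomputable def qcEmbed : 𝔸 × 𝔸 →ₗ[F] (Fin 2 → ZMod m → F) where
  toFun g := ![cyclicCoords F m g.1, cyclicCoords F m g.2]
  map_add' g h := by ext j; fin_cases j <;> simp
  map_smul' r g := by ext j; fin_cases j <;> simp

theorem qcEmbed_injective : Function.Injective (qcEmbed F m) := by
  intro g h hgh
  exact Prod.ext (cyclicCoords_injective (congrFun hgh 0)) (cyclicCoords_injective (congrFun hgh 1))

omit [NeZero m] in
theorem muQC_neg_one_apply {l : ℕ} (v : Fin l → ZMod m → F) (j : Fin l) (i : ZMod m) :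
    muQC l m (-1) v j i = v j (-i) := by
  simp [muQC, ZMod.inv_neg_one]

theorem sum_qcEmbed_mul_muQC_qcEmbed (a b : 𝔸 × 𝔸) :
    ∑ j, ∑ i, qcEmbed F m a j i * muQC 2 m (-1) (qcEmbed F m b) j i =
      cyclicCoords F m (a.1 * b.1 + a.2 * b.2) 0 := by
  simp [muQC_neg_one_apply, Fin.sum_univ_two, qcEmbed, sum_cyclicCoords_mul_cyclicCoords_neg]

variable (F m) in
noncomputable def qcCode (g : 𝔸 × 𝔸) : Submodule F (Fin 2 → ZMod m → F) :=
  ((𝔸 ∙ g).restrictScalars F).map (qcEmbed F m)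

theorem mem_qcCode {g : 𝔸 × 𝔸} {v : Fin 2 → ZMod m → F} :
    v ∈ qcCode F m g ↔ ∃ z : 𝔸, qcEmbed F m (z • g) = v := by
  simp [qcCode, Submodule.mem_span_singleton]

theorem qcCode_inj {g g' : 𝔸 × 𝔸} : qcCode F m g = qcCode F m g' ↔ 𝔸 ∙ g = 𝔸 ∙ g' :=
  (Submodule.map_injective_of_injective qcEmbed_injective).eq_iff.trans
    (Submodule.restrictScalars_injective F _ _).eq_iff

theorem qcEmbed_mem_qcDual_iff (a g : 𝔸 × 𝔸) :
    qcEmbed F m a ∈ qcDual ((qcCode F m g).map (muQC 2 m (-1))) ↔ a.1 * g.1 + a.2 * g.2 = 0 := by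
  change (∀ c ∈ _, _) ↔ _
  simp only [Submodule.mem_map, mem_qcCode, forall_exists_index, and_imp,
    forall_apply_eq_imp_iff, sum_qcEmbed_mul_muQC_qcEmbed]
  constructor
  · intro h
    refine eq_zero_of_forall_cyclicCoords_mul_zero fun z => ?_
    simpa [mul_add, mul_left_comm z] using h z
  · intro h z
    simp [mul_left_comm _ z, ← mul_add, h]

theorem qcCode_inf_qcDual_eq_bot_iff (g : 𝔸 × 𝔸) :
    qcCode F m g ⊓ qcDual ((qcCode F m g).map (muQC 2 m (-1))) = ⊥ ↔
      ∀ z : 𝔸, z * (g.1 ^ 2 + g.2 ^ 2) = 0 → z • g = 0 := by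
  rw [Submodule.eq_bot_iff]
  constructor
  · intro h z hz
    have hdual : qcEmbed F m (z • g) ∈ qcDual ((qcCode F m g).map (muQC 2 m (-1))) := by
      rw [qcEmbed_mem_qcDual_iff, Prod.smul_fst, Prod.smul_snd, smul_eq_mul, smul_eq_mul]
      linear_combination hz
    refine qcEmbed_injective ?_
    rw [h _ (Submodule.mem_inf.2 ⟨mem_qcCode.2 ⟨z, rfl⟩, hdual⟩), map_zero]
  · intro h v hv
    obtain ⟨hv, hdual⟩ := Submodule.mem_inf.1 hv
    obtain ⟨z, rfl⟩ := mem_qcCode.1 hv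
    rw [qcEmbed_mem_qcDual_iff, Prod.smul_fst, Prod.smul_snd, smul_eq_mul, smul_eq_mul] at hdual
    rw [h z (by linear_combination hdual), map_zero]

theorem qcCode_inf_qcDual_eq_bot_iff_isUnit [Finite F] [CharP F 2] (hm : (m : F) ≠ 0)
    {γ₁ γ₂ : 𝔸} (h : IsCoprime γ₁ γ₂) :
    qcCode F m (γ₁, γ₂) ⊓ qcDual ((qcCode F m (γ₁, γ₂)).map (muQC 2 m (-1))) = ⊥ ↔
      IsUnit (γ₁ + γ₂) := by
  have := isReduced_adjoinRoot_X_pow_sub_one hm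
  have : Finite 𝔸 := Finite.of_injective _ cyclicCoords_injective
  rw [qcCode_inf_qcDual_eq_bot_iff, isUnit_iff_mem_nonZeroDivisors_of_finite,
    add_mem_nonZeroDivisors_iff_of_isCoprime h]

section CharTwo

variable [CharP F 2]

omit [NeZero m] in
theorem X_pow_add_one_eq_X_pow_sub_one : (X ^ m + 1 : F[X]) = X ^ m - 1 :=
  (CharTwo.sub_eq_add _ _).symm

theorem polyToVec_mod_X_pow_add_one (p : F[X]) :
    polyToVec m (p % (X ^ m + 1)) = cyclicCoords F m (mk _ p) := by
  ext i
  rw [cyclicCoords_mk, X_pow_add_one_eq_X_pow_sub_one, modByMonic_eq_mod _ (monic_X_pow_sub_one m)]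
  rfl

theorem oneGenQC2_eq_qcCode (c₁ c₂ : F[X]) :
    oneGenQC2 m c₁ c₂ = qcCode F m (mk _ c₁, mk _ c₂) := by
  have hgen : {v | ∃ p : F[X], v = ![polyToVec m ((p * c₁) % (X ^ m + 1)),
      polyToVec m ((p * c₂) % (X ^ m + 1))]} =
      qcEmbed F m '' ↑((𝔸 ∙ ((mk _ c₁, mk _ c₂) : 𝔸 × 𝔸)).restrictScalars F) := by
    ext v
    simp only [Set.mem_ofPred_eq, Set.mem_image, SetLike.mem_coe, Submodule.restrictScalars_mem,
      Submodule.mem_span_singleton]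
    constructor
    · rintro ⟨p, rfl⟩
      exact ⟨_, ⟨mk _ p, rfl⟩, by simp [qcEmbed, polyToVec_mod_X_pow_add_one]⟩
    · rintro ⟨_, ⟨z, rfl⟩, rfl⟩
      obtain ⟨p, rfl⟩ := mk_surjective z
      exact ⟨p, by simp [qcEmbed, polyToVec_mod_X_pow_add_one]⟩
  rw [oneGenQC2, hgen, Submodule.span_image, Submodule.span_eq]
  rfl

end CharTwo

end Cyclic

theorem setOf_lcd_maximal_oneGenQC2_eq_range {F : Type*} [Field F] [Finite F] [DecidableEq F]
    [CharP F 2] {m : ℕ} [NeZero m] (hm : (m : F) ≠ 0) :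
    {C : Submodule F (Fin 2 → ZMod m → F) |
        (∃ c₁ c₂ : F[X], gcd (gcd c₁ c₂) (X ^ m + 1) = 1 ∧ C = oneGenQC2 m c₁ c₂) ∧
        C ⊓ qcDual (C.map (muQC 2 m (-1))) = ⊥} =
      Set.range fun γ : AdjoinRoot (X ^ m - 1 : F[X]) => qcCode F m (γ, γ + 1) := by
  ext C
  constructor
  · rintro ⟨⟨c₁, c₂, hgcd, rfl⟩, hlcd⟩
    rw [X_pow_add_one_eq_X_pow_sub_one] at hgcd
    rw [oneGenQC2_eq_qcCode, qcCode_inf_qcDual_eq_bot_iff_isUnit hm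
      (isCoprime_mk_of_gcd_gcd_eq_one hgcd), isUnit_add_iff_exists_span_singleton_eq] at hlcd
    obtain ⟨γ, hγ⟩ := hlcd
    exact ⟨γ, by rw [oneGenQC2_eq_qcCode, qcCode_inj, hγ]⟩
  · rintro ⟨γ, rfl⟩
    obtain ⟨c, rfl⟩ := mk_surjective γ
    have hgcd : gcd c (c + 1) = 1 := by
      rw [← normalize_gcd, normalize_eq_one, gcd_isUnit_iff]
      exact ⟨-1, 1, by ring⟩
    refine ⟨⟨c, c + 1, ?_, ?_⟩, ?_⟩
    · rw [hgcd, gcd_one_left]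
    · rw [oneGenQC2_eq_qcCode, map_add, map_one]
    · rw [qcCode_inf_qcDual_eq_bot_iff_isUnit hm ⟨-1, 1, by ring⟩, ← add_assoc,
        CharTwo.add_self_eq_zero, zero_add]
      exact isUnit_one

/-- Let `m` be odd and `q` a power of `2`.  A maximal 1-generator QC code `C` of index
`2` in `(F_q[x]/(x^m + 1))^2` is `μ_{-1}`-LCD iff there is a unique
`c(x) ∈ F_q[x]/(x^m + 1)` (i.e. a unique polynomial of degree `< m`) with
`C = F_q[x]·(c(x), c(x) + 1)`; moreover the total number of `μ_{-1}`-LCD maximal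
1-generator QC codes in `(F_q[x]/(x^m + 1))^2` is `q^m`. -/
theorem maximal_oneGen_qc_index_two_mu_neg_one_lcd_iff
    {F : Type*} [Field F] [Fintype F] [DecidableEq F] {m : ℕ} [NeZero m]
    (hm : Odd m) (hq : ∃ s : ℕ, Fintype.card F = 2 ^ s) :
    (∀ c₁ c₂ : Polynomial F, gcd (gcd c₁ c₂) (X ^ m + 1) = 1 →
      (oneGenQC2 m c₁ c₂ ⊓ qcDual ((oneGenQC2 m c₁ c₂).map (muQC 2 m (-1))) = ⊥ ↔
        ∃! c : Polynomial F, c.degree < (m : WithBot ℕ) ∧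
          oneGenQC2 m c₁ c₂ = oneGenQC2 m c (c + 1))) ∧
    Set.ncard {C : Submodule F (Fin 2 → ZMod m → F) |
        (∃ c₁ c₂ : Polynomial F, gcd (gcd c₁ c₂) (X ^ m + 1) = 1 ∧
          C = oneGenQC2 m c₁ c₂) ∧
        C ⊓ qcDual (C.map (muQC 2 m (-1))) = ⊥} = Fintype.card F ^ m := by
  obtain ⟨s, hs⟩ := hq
  have : CharP F 2 := charP_of_card_eq_prime_pow hs
  have hmF : (m : F) ≠ 0 := by
    rw [Ne, CharP.cast_eq_zero_iff F 2]
    exact hm.not_two_dvd_nat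
  refine ⟨fun c₁ c₂ hgcd => ?_, ?_⟩
  · rw [X_pow_add_one_eq_X_pow_sub_one] at hgcd
    rw [oneGenQC2_eq_qcCode, qcCode_inf_qcDual_eq_bot_iff_isUnit hmF
      (isCoprime_mk_of_gcd_gcd_eq_one hgcd), isUnit_add_iff_existsUnique_span_singleton_eq,
      ← existsUnique_degree_lt_iff (monic_X_pow_sub_one m), degree_X_pow_sub_one m]
    simp only [oneGenQC2_eq_qcCode, map_add, map_one, qcCode_inj]
  · rw [setOf_lcd_maximal_oneGenQC2_eq_range hmF, ← Nat.card_eq_fintype_card,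
      ← natCard_adjoinRoot_X_pow_sub_one F m]
    exact Set.ncard_range_of_injective fun _ _ h => eq_of_span_singleton_add_one_eq (qcCode_inj.1 h)
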